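/- arXiv:2203.03028 — 3 statements merged into one kernel-verified Lean document; each statement's English description precedes it below -/
import Mathlib

section
/- Let T > 0, let σ : [0,T] → (0,∞) and q_S, γ_S : [0,T] → ℝ be continuous, and let r_G ≥ 0. Let G : ℝ × ℝ × [0,T] → ℝ satisfy |G(v₁;x,t) − G(v₂;x,t)| ≤ L_G |v₁ − v₂| and |G(0;x,t)| ≤ C₀ e^{|x|} for all v₁, v₂ ∈ ℝ, x ∈ ℝ, t ∈ [0,T], with constants L_G, C₀ ≥ 0. Let κ ≥ 1, K ≥ 1, and define V(x,t) = K e^{λt} (e^{κx} + e^{−κx}). If λ ≥ Λ, where Λ = (1/2)κ²‖σ‖²_{L^∞(0,T)} + κ(‖q_S − γ_S‖_{L^∞(0,T)} + (1/2)‖σ‖²_{L^∞(0,T)}) + C₀/K + L_G, then ∂V/∂t(x,t) − (1/2)σ(t)² ∂²V/∂x²(x,t) − (q_S(t) − γ_S(t) − (1/2)σ(t)²) ∂V/∂x(x,t) + r_G V(x,t) − G(V(x,t); x, t) ≥ 0 for all (x,t) ∈ ℝ × [0,T]; that is, V is a (classical) supersolution of the semilinear Black–Scholes equation ∂v/∂t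 − 𝒜(t)v + r_G v = G(v(x,t);x,t). -/
/-!
Write `V = K e^{λt} φ(x)` with `φ(x) = e^{κx} + e^{-κx}`. Then `∂ₜV = λV`, `∂ₓₓV = κ²V` and
`|∂ₓV| ≤ κV`, so the linear part of the operator applied to `V` is at least
`(λ - ½κ²‖σ‖² - κ(‖q_S - γ_S‖ + ½‖σ‖²)) V`. The Lipschitz and growth bounds give
`G(V) ≤ L_G V + C₀ e^{|x|}`, and `K e^{|x|} ≤ V` because `κ ≥ 1` and `λ ≥ 0`,
so `G(V) ≤ (L_G + C₀/K) V`, which is absorbed by the choice `λ ≥ Λ`.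
-/

open Real

lemma hasDerivAt_exp_add_exp_neg (κ y : ℝ) :
    HasDerivAt (fun z => exp (κ * z) + exp (-(κ * z)))
      (κ * (exp (κ * y) - exp (-(κ * y)))) y := by
  have hpos := ((hasDerivAt_id' y).const_mul κ).exp
  have hneg : HasDerivAt (fun z => exp (-(κ * z))) (exp (-(κ * y)) * -(κ * 1)) y :=
    ((hasDerivAt_id' y).const_mul κ).neg.exp
  exact (hpos.add hneg).congr_deriv (by ring)

lemma hasDerivAt_exp_sub_exp_neg (κ y : ℝ) :
    HasDerivAt (fun z => exp (κ * z) - exp (-(κ * z)))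
      (κ * (exp (κ * y) + exp (-(κ * y)))) y := by
  have hpos := ((hasDerivAt_id' y).const_mul κ).exp
  have hneg : HasDerivAt (fun z => exp (-(κ * z))) (exp (-(κ * y)) * -(κ * 1)) y :=
    ((hasDerivAt_id' y).const_mul κ).neg.exp
  exact (hpos.sub hneg).congr_deriv (by ring)

lemma abs_exp_sub_exp_neg_le (a : ℝ) : |exp a - exp (-a)| ≤ exp a + exp (-a) :=
  abs_sub_le_iff.mpr ⟨by linarith [exp_pos (-a)], by linarith [exp_pos a]⟩

lemma exp_abs_le_exp_add_exp_neg {κ : ℝ} (hκ : 1 ≤ κ) (x : ℝ) :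
    exp |x| ≤ exp (κ * x) + exp (-(κ * x)) := by
  rcases le_total 0 x with hx | hx
  · have : exp |x| ≤ exp (κ * x) := exp_le_exp.mpr (by rw [abs_of_nonneg hx]; nlinarith)
    linarith [exp_pos (-(κ * x))]
  · have : exp |x| ≤ exp (-(κ * x)) := exp_le_exp.mpr (by rw [abs_of_nonpos hx]; nlinarith)
    linarith [exp_pos (κ * x)]

lemma le_mul_add_of_abs_sub_le {a b L v c : ℝ} (hv : 0 ≤ v) (hlip : |a - b| ≤ L * |v - 0|)
    (hb : |b| ≤ c) : a ≤ L * v + c := by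
  rw [sub_zero, abs_of_nonneg hv] at hlip
  linarith [(abs_le.mp hlip).2, (abs_le.mp hb).2]

lemma IsGreatest.nonneg_of_abs_image {α : Type*} {f : α → ℝ} {s : Set α} {M : ℝ}
    (h : IsGreatest ((fun t => |f t|) '' s) M) : 0 ≤ M := by
  obtain ⟨t, -, rfl⟩ := h.1
  exact abs_nonneg _

noncomputable def barrier (K lam κ : ℝ) (x t : ℝ) : ℝ :=
  K * exp (lam * t) * (exp (κ * x) + exp (-(κ * x)))

namespace barrier

variable {K lam κ : ℝ}

lemma pos (hK : 0 < K) (x t : ℝ) : 0 < barrier K lam κ x t := by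
  unfold barrier; positivity

lemma deriv_time (x t : ℝ) :
    deriv (fun s => barrier K lam κ x s) t = lam * barrier K lam κ x t := by
  have h := (((hasDerivAt_id' t).const_mul lam).exp.const_mul K).mul_const
    (exp (κ * x) + exp (-(κ * x)))
  unfold barrier
  rw [h.deriv]
  ring

lemma deriv_space (y t : ℝ) :
    deriv (fun z => barrier K lam κ z t) y
      = K * exp (lam * t) * (κ * (exp (κ * y) - exp (-(κ * y)))) :=
  ((hasDerivAt_exp_add_exp_neg κ y).const_mul (K * exp (lam * t))).deriv

lemma deriv_deriv_space (x t : ℝ) :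
    deriv (fun y => deriv (fun z => barrier K lam κ z t) y) x
      = κ ^ 2 * barrier K lam κ x t := by
  have h := ((hasDerivAt_exp_sub_exp_neg κ x).const_mul κ).const_mul (K * exp (lam * t))
  simp only [deriv_space]
  rw [h.deriv]
  unfold barrier
  ring

lemma abs_deriv_space_le (hK : 0 ≤ K) (hκ : 0 ≤ κ) (x t : ℝ) :
    |deriv (fun z => barrier K lam κ z t) x| ≤ κ * barrier K lam κ x t := by
  rw [deriv_space, abs_mul, abs_of_nonneg (by positivity : 0 ≤ K * exp (lam * t)), abs_mul,
    abs_of_nonneg hκ]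
  calc K * exp (lam * t) * (κ * |exp (κ * x) - exp (-(κ * x))|)
      ≤ K * exp (lam * t) * (κ * (exp (κ * x) + exp (-(κ * x)))) := by
        gcongr; exact abs_exp_sub_exp_neg_le _
    _ = κ * barrier K lam κ x t := by unfold barrier; ring

lemma mul_exp_abs_le (hK : 0 ≤ K) (hlam : 0 ≤ lam) (hκ : 1 ≤ κ) {t : ℝ} (ht : 0 ≤ t)
    (x : ℝ) : K * exp |x| ≤ barrier K lam κ x t := by
  have hexp : 1 ≤ exp (lam * t) := one_le_exp (mul_nonneg hlam ht)
  calc K * exp |x| ≤ K * 1 * (exp (κ * x) + exp (-(κ * x))) := by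
        rw [mul_one]; gcongr; exact exp_abs_le_exp_add_exp_neg hκ x
    _ ≤ barrier K lam κ x t := by unfold barrier; gcongr

end barrier

theorem stmt_6_general (T : ℝ) (sigma qS gammaS : ℝ → ℝ)
    (rG : ℝ) (hrG : 0 ≤ rG)
    (G : ℝ → ℝ → ℝ → ℝ) (LG C0 : ℝ) (hLG : 0 ≤ LG) (hC0 : 0 ≤ C0)
    (hGlip : ∀ v₁ v₂ x : ℝ, ∀ t ∈ Set.Icc (0:ℝ) T,
      |G v₁ x t - G v₂ x t| ≤ LG * |v₁ - v₂|)
    (hG0 : ∀ x : ℝ, ∀ t ∈ Set.Icc (0:ℝ) T, |G 0 x t| ≤ C0 * Real.exp |x|)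
    (kappa K lam Msigma Mq : ℝ) (hkappa : 1 ≤ kappa) (hK : 1 ≤ K)
    -- `Msigma = ‖σ‖_{L^∞(0,T)}`, `Mq = ‖q_S − γ_S‖_{L^∞(0,T)}`
    (hMsigma : IsGreatest ((fun t => |sigma t|) '' Set.Icc 0 T) Msigma)
    (hMq : IsGreatest ((fun t => |qS t - gammaS t|) '' Set.Icc 0 T) Mq)
    (hlam : lam ≥ (1/2) * kappa ^ 2 * Msigma ^ 2
        + kappa * (Mq + (1/2) * Msigma ^ 2) + C0 / K + LG)
    (V : ℝ → ℝ → ℝ)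
    (hV : ∀ x t : ℝ, V x t = K * Real.exp (lam * t)
        * (Real.exp (kappa * x) + Real.exp (-(kappa * x)))) :
    ∀ x : ℝ, ∀ t ∈ Set.Icc (0:ℝ) T,
      deriv (fun s => V x s) t
        - (1/2) * (sigma t) ^ 2 * deriv (fun y => deriv (fun z => V z t) y) x
        - (qS t - gammaS t - (1/2) * (sigma t) ^ 2) * deriv (fun y => V y t) x
        + rG * V x t - G (V x t) x t ≥ 0 := by
  intro x t ht
  obtain rfl : V = barrier K lam kappa := funext₂ hV
  have hKpos : 0 < K := one_pos.trans_le hK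
  have hsigma : sigma t ^ 2 ≤ Msigma ^ 2 :=
    sq_le_sq.mpr ((hMsigma.2 ⟨t, ht, rfl⟩).trans (le_abs_self _))
  have hdrift : |qS t - gammaS t - (1/2) * sigma t ^ 2| ≤ Mq + (1/2) * Msigma ^ 2 := by
    refine (abs_sub _ _).trans ?_
    rw [abs_of_nonneg (by positivity : 0 ≤ (1/2) * sigma t ^ 2)]
    linarith [hMq.2 ⟨t, ht, rfl⟩]
  have hMq0 : 0 ≤ Mq := hMq.nonneg_of_abs_image
  have hlam0 : 0 ≤ lam := le_trans (by positivity) hlam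
  rw [barrier.deriv_time, barrier.deriv_deriv_space]
  set W := barrier K lam kappa x t
  have hW : 0 < W := barrier.pos hKpos x t
  have hG : G W x t ≤ LG * W + C0 / K * W := by
    have hgrowth : C0 * exp |x| ≤ C0 / K * W := by
      calc C0 * exp |x| = C0 / K * (K * exp |x|) := by field_simp
        _ ≤ C0 / K * W := by gcongr; exact barrier.mul_exp_abs_le hKpos.le hlam0 hkappa ht.1 x
    linarith [le_mul_add_of_abs_sub_le hW.le (hGlip W 0 x t ht) (hG0 x t ht)]
  have hdriftW : (qS t - gammaS t - (1/2) * sigma t ^ 2)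
      * deriv (fun y => barrier K lam kappa y t) x ≤ (Mq + (1/2) * Msigma ^ 2) * (kappa * W) := by
    refine (le_abs_self _).trans ?_
    rw [abs_mul]
    exact mul_le_mul hdrift (barrier.abs_deriv_space_le hKpos.le (by linarith) x t)
      (abs_nonneg _) (by positivity)
  linarith [mul_le_mul_of_nonneg_right hlam hW.le, mul_le_mul_of_nonneg_right hsigma
    (by positivity : 0 ≤ kappa ^ 2 * W), mul_nonneg hrG hW.le]

/-- `V(x,t) = K e^{λt}(e^{κx} + e^{−κx})` with `λ ≥ Λ` is a classical supersolution
of the semilinear Black–Scholes equation `∂v/∂t − 𝒜(t)v + r_G v = G(v;x,t)`. -/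
theorem stmt_6 (T : ℝ) (hT : 0 < T) (sigma qS gammaS : ℝ → ℝ)
    (hsigmac : ContinuousOn sigma (Set.Icc 0 T))
    (hsigmapos : ∀ t ∈ Set.Icc (0:ℝ) T, 0 < sigma t)
    (hqc : ContinuousOn qS (Set.Icc 0 T)) (hgc : ContinuousOn gammaS (Set.Icc 0 T))
    (rG : ℝ) (hrG : 0 ≤ rG)
    (G : ℝ → ℝ → ℝ → ℝ) (LG C0 : ℝ) (hLG : 0 ≤ LG) (hC0 : 0 ≤ C0)
    (hGlip : ∀ v₁ v₂ x : ℝ, ∀ t ∈ Set.Icc (0:ℝ) T,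
      |G v₁ x t - G v₂ x t| ≤ LG * |v₁ - v₂|)
    (hG0 : ∀ x : ℝ, ∀ t ∈ Set.Icc (0:ℝ) T, |G 0 x t| ≤ C0 * Real.exp |x|)
    (kappa K lam Msigma Mq : ℝ) (hkappa : 1 ≤ kappa) (hK : 1 ≤ K)
    -- `Msigma = ‖σ‖_{L^∞(0,T)}`, `Mq = ‖q_S − γ_S‖_{L^∞(0,T)}`
    (hMsigma : IsGreatest ((fun t => |sigma t|) '' Set.Icc 0 T) Msigma)
    (hMq : IsGreatest ((fun t => |qS t - gammaS t|) '' Set.Icc 0 T) Mq)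
    (hlam : lam ≥ (1/2) * kappa ^ 2 * Msigma ^ 2
        + kappa * (Mq + (1/2) * Msigma ^ 2) + C0 / K + LG)
    (V : ℝ → ℝ → ℝ)
    (hV : ∀ x t : ℝ, V x t = K * Real.exp (lam * t)
        * (Real.exp (kappa * x) + Real.exp (-(kappa * x)))) :
    ∀ x : ℝ, ∀ t ∈ Set.Icc (0:ℝ) T,
      deriv (fun s => V x s) t
        - (1/2) * (sigma t) ^ 2 * deriv (fun y => deriv (fun z => V z t) y) x
        - (qS t - gammaS t - (1/2) * (sigma t) ^ 2) * deriv (fun y => V y t) x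
        + rG * V x t - G (V x t) x t ≥ 0 :=
  stmt_6_general T sigma qS gammaS rG hrG G LG C0 hLG hC0 hGlip hG0 kappa K lam Msigma Mq hkappa hK
    hMsigma hMq hlam V hV
end

section
/- (Weak maximum principle with exponential growth.) Let T > 0, let σ : [0,T] → (0,∞) and q_S, γ_S : [0,T] → ℝ be continuous, and let r_G ≥ 0. Let w : ℝ × [0,T] → ℝ be continuous, with ∂w/∂t, ∂w/∂x, ∂²w/∂x² existing and continuous on ℝ × (0,T], and suppose there exist constants C, κ ≥ 0 with |w(x,t)| ≤ C e^{κ|x|} for all (x,t) ∈ ℝ × [0,T]. If ∂w/∂t − (1/2)σ(t)² ∂²w/∂x² − (q_S(t) − γ_S(t) − (1/2)σ(t)²) ∂w/∂x + r_G w ≥ 0 on ℝ × (0,T] and w(x,0) ≥ 0 for all x ∈ ℝ, then w(x,t) ≥ 0 for all (x,t) ∈ ℝ × [0,T]. -/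
/-!
Perturb `w` by `ε B` with the barrier `B(x,t) = e^{αt} cosh((κ+1)x)`. Since `B` outgrows
`C e^{κ|x|}`, a negative value of `v = w + ε B` forces a negative global minimum of `v` on
`ℝ × [0,T]`, attained at some `t₀ > 0` because `v(·,0) > 0`. There `∂ₜv ≤ 0`, `∂ₓv = 0` and
`∂ₓ²v ≥ 0`, so `(∂ₜ − 𝒜 + r_G) v ≤ 0`. On the other hand, once `α` exceeds the maximum over
`[0,T]` of `σ²(κ+1)²/2 + |q_S − γ_S − σ²/2| |κ+1|`, the barrier is a strict supersolution,
which makes `(∂ₜ − 𝒜 + r_G) v > 0`. Letting `ε → 0` gives `w ≥ 0`.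
-/

open Real Set Filter Topology

lemma IsLocalMinOn.hasDerivWithinAt_nonpos_of_Ioo_subset {f : ℝ → ℝ} {s : Set ℝ} {a t d : ℝ}
    (hmin : IsLocalMinOn f s t) (hf : HasDerivWithinAt f d s t) (hat : a < t)
    (hs : Ioo a t ⊆ s) : d ≤ 0 := by
  have hcone : a - t ∈ posTangentConeAt s t :=
    sub_mem_posTangentConeAt_of_openSegment_subset <| by
      rwa [openSegment_symm, openSegment_eq_Ioo hat]
  have := hmin.hasFDerivWithinAt_nonneg hf.hasFDerivWithinAt hcone
  simp only [ContinuousLinearMap.toSpanSingleton_apply, smul_eq_mul] at this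
  exact nonpos_of_mul_nonneg_right this (sub_neg.2 hat)

lemma IsLocalMin.hasDerivAt_deriv_nonneg {f f' : ℝ → ℝ} {a c : ℝ} (hmin : IsLocalMin f a)
    (hf : ∀ x, HasDerivAt f (f' x) x) (hf' : HasDerivAt f' c a) : 0 ≤ c := by
  have hderiv : deriv f = f' := funext fun x => (hf x).deriv
  by_contra! hc
  -- the second derivative test makes `a` a local maximum too, so `f` is locally constant
  have hmax : IsLocalMax f a :=
    isLocalMax_of_deriv_deriv_neg (by rwa [hderiv, hf'.deriv])
      (by rw [hderiv]; exact hmin.hasDerivAt_eq_zero (hf a)) (hf a).continuousAt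
  have hconst : f =ᶠ[𝓝 a] fun _ => f a :=
    (hmin.and hmax).mono fun x hx => le_antisymm hx.2 hx.1
  have hf'_zero : f' =ᶠ[𝓝 a] fun _ => 0 := by
    simpa [hderiv] using hconst.deriv
  have := (hf'.congr_of_eventuallyEq hf'_zero.symm).unique (hasDerivAt_const a (0 : ℝ))
  exact hc.ne this

lemma Real.mul_sinh_le_abs_mul_cosh (c x : ℝ) : c * sinh x ≤ |c| * cosh x :=
  calc c * sinh x ≤ |c| * |sinh x| := by rw [← abs_mul]; exact le_abs_self _
    _ ≤ |c| * cosh x := by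
      gcongr
      rw [abs_sinh, ← cosh_abs x]
      exact (sinh_lt_cosh _).le

lemma Real.exp_mul_abs_le_two_mul_cosh (k x : ℝ) : exp (k * |x|) ≤ 2 * cosh (k * x) :=
  calc exp (k * |x|) ≤ exp |k * x| := exp_le_exp.2 <| by
        rw [abs_mul]; exact mul_le_mul_of_nonneg_right (le_abs_self k) (abs_nonneg x)
    _ ≤ exp (k * x) + exp (-(k * x)) := exp_abs_le _
    _ = 2 * cosh (k * x) := by rw [cosh_eq]; ring

lemma ContinuousOn.exists_isMinOn_univ_prod {f : ℝ × ℝ → ℝ} {K : Set ℝ}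
    (hf : ContinuousOn f (univ ×ˢ K)) (hK : IsCompact K) {R : ℝ}
    (hR : ∀ p ∈ univ ×ˢ K, R ≤ |p.1| → 0 ≤ f p)
    {p₁ : ℝ × ℝ} (hp₁ : p₁ ∈ univ ×ˢ K) (hneg : f p₁ < 0) :
    ∃ p ∈ univ ×ˢ K, IsMinOn f (univ ×ˢ K) p := by
  refine hf.exists_isMinOn' (isClosed_univ.prod hK.isClosed) hp₁ ?_
  rw [eventually_inf_principal]
  refine mem_cocompact.2 ⟨Icc (-R) R ×ˢ K, isCompact_Icc.prod hK, fun p hp hpK => ?_⟩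
  have hR' : R ≤ |p.1| := by
    by_contra! h
    exact hp ⟨abs_le.1 h.le, hpK.2⟩
  exact hneg.le.trans (hR p hpK hR')

noncomputable def expCoshBarrier (α k x t : ℝ) : ℝ := exp (α * t) * cosh (k * x)

section Barrier

variable {α k : ℝ}

lemma expCoshBarrier_pos (x t : ℝ) : 0 < expCoshBarrier α k x t :=
  mul_pos (exp_pos _) (cosh_pos _)

lemma continuous_expCoshBarrier : Continuous fun p : ℝ × ℝ => expCoshBarrier α k p.1 p.2 := by
  unfold expCoshBarrier; fun_prop

lemma hasDerivAt_expCoshBarrier_time (x t : ℝ) :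
    HasDerivAt (expCoshBarrier α k x) (α * expCoshBarrier α k x t) t := by
  have h : HasDerivAt (fun s => exp (α * s) * cosh (k * x)) (exp (α * t) * α * cosh (k * x)) t := by
    simpa using ((hasDerivAt_id t).const_mul α).exp.mul_const (cosh (k * x))
  exact h.congr_deriv (by unfold expCoshBarrier; ring)

lemma hasDerivAt_expCoshBarrier_space (x t : ℝ) :
    HasDerivAt (expCoshBarrier α k · t) (k * exp (α * t) * sinh (k * x)) x := by
  have h : HasDerivAt (fun y => exp (α * t) * cosh (k * y))
      (exp (α * t) * (sinh (k * x) * k)) x := by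
    simpa using (((hasDerivAt_id x).const_mul k).cosh).const_mul (exp (α * t))
  exact h.congr_deriv (by ring)

lemma hasDerivAt_expCoshBarrier_space_deriv (x t : ℝ) :
    HasDerivAt (fun y => k * exp (α * t) * sinh (k * y)) (k ^ 2 * expCoshBarrier α k x t) x := by
  have h : HasDerivAt (fun y => k * exp (α * t) * sinh (k * y))
      (k * exp (α * t) * (cosh (k * x) * k)) x := by
    simpa using (((hasDerivAt_id x).const_mul k).sinh).const_mul (k * exp (α * t))
  exact h.congr_deriv (by unfold expCoshBarrier; ring)

lemma exp_mul_abs_le_two_mul_expCoshBarrier (hα : 0 ≤ α) (x : ℝ) {t : ℝ} (ht : 0 ≤ t) :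
    exp (k * |x|) ≤ 2 * expCoshBarrier α k x t :=
  calc exp (k * |x|) ≤ 2 * cosh (k * x) := exp_mul_abs_le_two_mul_cosh k x
    _ ≤ 2 * expCoshBarrier α k x t := by
      unfold expCoshBarrier
      have := one_le_exp (mul_nonneg hα ht)
      have := cosh_pos (k * x)
      nlinarith

lemma expCoshBarrier_strict_supersolution {a b : ℝ} (hα : a * k ^ 2 + |b| * |k| < α)
    (x t : ℝ) :
    0 < α * expCoshBarrier α k x t - a * (k ^ 2 * expCoshBarrier α k x t)
      - b * (k * exp (α * t) * sinh (k * x)) := by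
  have hsinh := mul_sinh_le_abs_mul_cosh (b * k) (k * x)
  rw [abs_mul] at hsinh
  have hE := exp_pos (α * t)
  have hC := cosh_pos (k * x)
  unfold expCoshBarrier
  nlinarith [mul_le_mul_of_nonneg_left hsinh hE.le, mul_pos hE hC]

end Barrier

section MaximumPrinciple

variable {T α κ C : ℝ} {a b r : ℝ → ℝ} {w wt wx wxx : ℝ → ℝ → ℝ}

lemma add_smul_expCoshBarrier_nonneg_of_le_abs (hα : 0 ≤ α)
    (hgrowth : ∀ x : ℝ, ∀ t ∈ Icc (0:ℝ) T, |w x t| ≤ C * exp (κ * |x|))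
    {ε : ℝ} (hε : 0 < ε) {x t : ℝ} (ht : t ∈ Icc 0 T) (hx : 2 * C / ε ≤ |x|) :
    0 ≤ w x t + ε * expCoshBarrier α (κ + 1) x t := by
  have hw := neg_le_of_abs_le (hgrowth x t ht)
  have hB := exp_mul_abs_le_two_mul_expCoshBarrier (k := κ + 1) hα x ht.1
  have hexp : C ≤ ε / 2 * exp |x| := by
    have := add_one_le_exp |x|
    rw [div_le_iff₀ hε] at hx
    nlinarith
  have hsplit : exp ((κ + 1) * |x|) = exp (κ * |x|) * exp |x| := by rw [← exp_add]; ring_nf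
  rw [hsplit] at hB
  nlinarith [exp_pos (κ * |x|), mul_le_mul_of_nonneg_left hexp (exp_pos (κ * |x|)).le]

lemma add_smul_expCoshBarrier_nonneg
    (ha : ∀ t ∈ Ioc (0:ℝ) T, 0 ≤ a t) (hr : ∀ t ∈ Ioc (0:ℝ) T, 0 ≤ r t) (hα₀ : 0 ≤ α)
    (hα : ∀ t ∈ Ioc (0:ℝ) T, a t * (κ + 1) ^ 2 + |b t| * |κ + 1| < α)
    (hcont : ContinuousOn (fun p : ℝ × ℝ => w p.1 p.2) (univ ×ˢ Icc 0 T))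
    (hwt : ∀ x : ℝ, ∀ t ∈ Ioc (0:ℝ) T, HasDerivWithinAt (fun s => w x s) (wt x t) (Ioc 0 T) t)
    (hwx : ∀ x : ℝ, ∀ t ∈ Ioc (0:ℝ) T, HasDerivAt (fun y => w y t) (wx x t) x)
    (hwxx : ∀ x : ℝ, ∀ t ∈ Ioc (0:ℝ) T, HasDerivAt (fun y => wx y t) (wxx x t) x)
    (hgrowth : ∀ x : ℝ, ∀ t ∈ Icc (0:ℝ) T, |w x t| ≤ C * exp (κ * |x|))
    (hineq : ∀ x : ℝ, ∀ t ∈ Ioc (0:ℝ) T,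
      0 ≤ wt x t - a t * wxx x t - b t * wx x t + r t * w x t)
    (hinit : ∀ x : ℝ, 0 ≤ w x 0) {ε : ℝ} (hε : 0 < ε) :
    ∀ x : ℝ, ∀ t ∈ Icc (0:ℝ) T, 0 ≤ w x t + ε * expCoshBarrier α (κ + 1) x t := by
  set v : ℝ × ℝ → ℝ := fun p => w p.1 p.2 + ε * expCoshBarrier α (κ + 1) p.1 p.2 with hv
  by_contra! hneg
  obtain ⟨x₁, t₁, ht₁, hv₁⟩ := hneg
  have hvc : ContinuousOn v (univ ×ˢ Icc 0 T) :=
    hcont.add (continuous_const.mul continuous_expCoshBarrier).continuousOn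
  obtain ⟨⟨x₀, t₀⟩, ⟨-, ht₀⟩, hmin⟩ := hvc.exists_isMinOn_univ_prod isCompact_Icc
    (fun p hp => add_smul_expCoshBarrier_nonneg_of_le_abs hα₀ hgrowth hε hp.2)
    (p₁ := (x₁, t₁)) ⟨trivial, ht₁⟩ hv₁
  have hv₀ : v (x₀, t₀) < 0 := (hmin (a := (x₁, t₁)) ⟨trivial, ht₁⟩).trans_lt hv₁
  have ht₀' : t₀ ∈ Ioc 0 T := by
    refine ⟨ht₀.1.lt_of_ne ?_, ht₀.2⟩
    rintro rfl
    exact hv₀.not_ge (add_nonneg (hinit x₀) (mul_pos hε (expCoshBarrier_pos x₀ 0)).le)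
  have hvt : wt x₀ t₀ + ε * (α * expCoshBarrier α (κ + 1) x₀ t₀) ≤ 0 :=
    IsLocalMinOn.hasDerivWithinAt_nonpos_of_Ioo_subset (f := fun t => v (x₀, t))
      (IsMinOn.localize fun t ht => hmin ⟨trivial, Ioc_subset_Icc_self ht⟩)
      ((hwt x₀ t₀ ht₀').add ((hasDerivAt_expCoshBarrier_time x₀ t₀).hasDerivWithinAt.const_mul ε))
      ht₀'.1 (Ioo_subset_Ioc_self.trans (Ioc_subset_Ioc_right ht₀'.2))
  have hslice : IsLocalMin (fun y => v (y, t₀)) x₀ :=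
    IsMinOn.isLocalMin (fun y _ => hmin ⟨trivial, ht₀⟩) univ_mem
  have hvx' : ∀ y, HasDerivAt (fun y => v (y, t₀))
      (wx y t₀ + ε * ((κ + 1) * exp (α * t₀) * sinh ((κ + 1) * y))) y := fun y =>
    (hwx y t₀ ht₀').add ((hasDerivAt_expCoshBarrier_space y t₀).const_mul ε)
  have hvx := hslice.hasDerivAt_eq_zero (hvx' x₀)
  have hvxx := hslice.hasDerivAt_deriv_nonneg hvx'
    ((hwxx x₀ t₀ ht₀').add ((hasDerivAt_expCoshBarrier_space_deriv x₀ t₀).const_mul ε))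
  have hB := expCoshBarrier_strict_supersolution (hα t₀ ht₀') x₀ t₀
  simp only [hv] at hv₀
  linarith [hineq x₀ t₀ ht₀', mul_nonneg (ha t₀ ht₀') hvxx, mul_pos hε hB,
    congrArg (b t₀ * ·) hvx,
    mul_nonpos_of_nonneg_of_nonpos (hr t₀ ht₀') hv₀.le,
    mul_nonneg (mul_nonneg hε.le (hr t₀ ht₀')) (expCoshBarrier_pos (α := α) (k := κ + 1) x₀ t₀).le]

theorem nonneg_of_parabolic_supersolution
    (hac : ContinuousOn a (Icc 0 T)) (hbc : ContinuousOn b (Icc 0 T))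
    (ha : ∀ t ∈ Ioc (0:ℝ) T, 0 ≤ a t) (hr : ∀ t ∈ Ioc (0:ℝ) T, 0 ≤ r t)
    (hcont : ContinuousOn (fun p : ℝ × ℝ => w p.1 p.2) (univ ×ˢ Icc 0 T))
    (hwt : ∀ x : ℝ, ∀ t ∈ Ioc (0:ℝ) T, HasDerivWithinAt (fun s => w x s) (wt x t) (Ioc 0 T) t)
    (hwx : ∀ x : ℝ, ∀ t ∈ Ioc (0:ℝ) T, HasDerivAt (fun y => w y t) (wx x t) x)
    (hwxx : ∀ x : ℝ, ∀ t ∈ Ioc (0:ℝ) T, HasDerivAt (fun y => wx y t) (wxx x t) x)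
    (hgrowth : ∀ x : ℝ, ∀ t ∈ Icc (0:ℝ) T, |w x t| ≤ C * exp (κ * |x|))
    (hineq : ∀ x : ℝ, ∀ t ∈ Ioc (0:ℝ) T,
      0 ≤ wt x t - a t * wxx x t - b t * wx x t + r t * w x t)
    (hinit : ∀ x : ℝ, 0 ≤ w x 0) :
    ∀ x : ℝ, ∀ t ∈ Icc (0:ℝ) T, 0 ≤ w x t := by
  obtain ⟨M, hM₀, hM⟩ := (isCompact_Icc.bddAbove_image
    (f := fun t => a t * (κ + 1) ^ 2 + |b t| * |κ + 1|)
    ((hac.mul continuousOn_const).add (hbc.abs.mul continuousOn_const))).exists_ge 0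
  have hperturbed (ε : ℝ) (hε : 0 < ε) :
      ∀ x : ℝ, ∀ t ∈ Icc (0:ℝ) T, 0 ≤ w x t + ε * expCoshBarrier (M + 1) (κ + 1) x t :=
    add_smul_expCoshBarrier_nonneg ha hr (by linarith)
    (fun t ht => (hM _ (mem_image_of_mem _ (Ioc_subset_Icc_self ht))).trans_lt (lt_add_one M))
    hcont hwt hwx hwxx hgrowth hineq hinit hε
  intro x t ht
  refine le_of_forall_pos_le_add fun δ hδ => ?_
  have hB := expCoshBarrier_pos (α := M + 1) (k := κ + 1) x t
  have := hperturbed _ (div_pos hδ hB) x t ht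
  rwa [div_mul_cancel₀ _ hB.ne'] at this

end MaximumPrinciple

theorem stmt_9_general (T : ℝ) (sigma qS gammaS : ℝ → ℝ)
    (hsigmac : ContinuousOn sigma (Set.Icc 0 T))
    (hqc : ContinuousOn qS (Set.Icc 0 T)) (hgc : ContinuousOn gammaS (Set.Icc 0 T))
    (rG : ℝ) (hrG : 0 ≤ rG)
    (w wt wx wxx : ℝ → ℝ → ℝ)
    (hcont : ContinuousOn (fun p : ℝ × ℝ => w p.1 p.2) (Set.univ ×ˢ Set.Icc 0 T))
    (hwt : ∀ x : ℝ, ∀ t ∈ Set.Ioc (0:ℝ) T,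
      HasDerivWithinAt (fun s => w x s) (wt x t) (Set.Ioc 0 T) t)
    (hwx : ∀ x : ℝ, ∀ t ∈ Set.Ioc (0:ℝ) T, HasDerivAt (fun y => w y t) (wx x t) x)
    (hwxx : ∀ x : ℝ, ∀ t ∈ Set.Ioc (0:ℝ) T, HasDerivAt (fun y => wx y t) (wxx x t) x)
    (C kappa : ℝ)
    (hgrowth : ∀ x : ℝ, ∀ t ∈ Set.Icc (0:ℝ) T, |w x t| ≤ C * Real.exp (kappa * |x|))
    (hineq : ∀ x : ℝ, ∀ t ∈ Set.Ioc (0:ℝ) T,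
      wt x t - (1/2) * (sigma t) ^ 2 * wxx x t
        - (qS t - gammaS t - (1/2) * (sigma t) ^ 2) * wx x t + rG * w x t ≥ 0)
    (hinit : ∀ x : ℝ, 0 ≤ w x 0) :
    ∀ x : ℝ, ∀ t ∈ Set.Icc (0:ℝ) T, 0 ≤ w x t :=
  nonneg_of_parabolic_supersolution (a := fun t => (1/2) * sigma t ^ 2)
    (b := fun t => qS t - gammaS t - (1/2) * sigma t ^ 2) (r := fun _ => rG)
    (continuousOn_const.mul (hsigmac.pow 2))
    ((hqc.sub hgc).sub (continuousOn_const.mul (hsigmac.pow 2)))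
    (fun t _ => by positivity) (fun _ _ => hrG) hcont hwt hwx hwxx hgrowth hineq hinit

/-- Weak maximum principle with exponential growth for the parabolic operator
`∂/∂t − 𝒜(t) + r_G` on `ℝ × [0,T]`: if `w` is continuous on `ℝ × [0,T]`, has
continuous derivatives `∂w/∂t, ∂w/∂x, ∂²w/∂x²` on `ℝ × (0,T]`, grows at most like
`C e^{κ|x|}`, satisfies `∂w/∂t − (1/2)σ(t)²∂²w/∂x² − (q_S(t) − γ_S(t) − (1/2)σ(t)²)∂w/∂x
+ r_G w ≥ 0` on `ℝ × (0,T]` and `w(·,0) ≥ 0`, then `w ≥ 0` on `ℝ × [0,T]`. -/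
theorem stmt_9 (T : ℝ) (hT : 0 < T) (sigma qS gammaS : ℝ → ℝ)
    (hsigmac : ContinuousOn sigma (Set.Icc 0 T))
    (hsigmapos : ∀ t ∈ Set.Icc (0:ℝ) T, 0 < sigma t)
    (hqc : ContinuousOn qS (Set.Icc 0 T)) (hgc : ContinuousOn gammaS (Set.Icc 0 T))
    (rG : ℝ) (hrG : 0 ≤ rG)
    (w wt wx wxx : ℝ → ℝ → ℝ)
    (hcont : ContinuousOn (fun p : ℝ × ℝ => w p.1 p.2) (Set.univ ×ˢ Set.Icc 0 T))
    (hwt : ∀ x : ℝ, ∀ t ∈ Set.Ioc (0:ℝ) T,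
      HasDerivWithinAt (fun s => w x s) (wt x t) (Set.Ioc 0 T) t)
    (hwx : ∀ x : ℝ, ∀ t ∈ Set.Ioc (0:ℝ) T, HasDerivAt (fun y => w y t) (wx x t) x)
    (hwxx : ∀ x : ℝ, ∀ t ∈ Set.Ioc (0:ℝ) T, HasDerivAt (fun y => wx y t) (wxx x t) x)
    (hwtc : ContinuousOn (fun p : ℝ × ℝ => wt p.1 p.2) (Set.univ ×ˢ Set.Ioc 0 T))
    (hwxc : ContinuousOn (fun p : ℝ × ℝ => wx p.1 p.2) (Set.univ ×ˢ Set.Ioc 0 T))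
    (hwxxc : ContinuousOn (fun p : ℝ × ℝ => wxx p.1 p.2) (Set.univ ×ˢ Set.Ioc 0 T))
    (C kappa : ℝ) (hC : 0 ≤ C) (hkappa : 0 ≤ kappa)
    (hgrowth : ∀ x : ℝ, ∀ t ∈ Set.Icc (0:ℝ) T, |w x t| ≤ C * Real.exp (kappa * |x|))
    (hineq : ∀ x : ℝ, ∀ t ∈ Set.Ioc (0:ℝ) T,
      wt x t - (1/2) * (sigma t) ^ 2 * wxx x t
        - (qS t - gammaS t - (1/2) * (sigma t) ^ 2) * wx x t + rG * w x t ≥ 0)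
    (hinit : ∀ x : ℝ, 0 ≤ w x 0) :
    ∀ x : ℝ, ∀ t ∈ Set.Icc (0:ℝ) T, 0 ≤ w x t :=
  stmt_9_general T sigma qS gammaS hsigmac hqc hgc rG hrG w wt wx wxx hcont hwt hwx hwxx C kappa
    hgrowth hineq hinit
end

section
/- (Weak comparison.) Let T > 0, let σ : [0,T] → (0,∞) and q_S, γ_S : [0,T] → ℝ be continuous, let r_G ≥ 0, and let f : ℝ × (0,T] → ℝ. Let v̄, v̲ : ℝ × [0,T] → ℝ be continuous, with ∂/∂t, ∂/∂x, ∂²/∂x² existing and continuous on ℝ × (0,T], each satisfying an exponential growth bound |v̄(x,t)|, |v̲(x,t)| ≤ C e^{κ|x|} for some constants C, κ ≥ 0. Suppose ∂v̄/∂t − (1/2)σ(t)² ∂²v̄/∂x² − (q_S(t) − γ_S(t) − (1/2)σ(t)²) ∂v̄/∂x + r_G v̄ ≥ f(x,t) and ∂v̲/∂t − (1/2)σ(t)² ∂²v̲/∂x² − (q_S(t) − γ_S(t) − (1/2)σ(t)²) ∂v̲/∂x + r_G v̲ ≤ f(x,t) on ℝ × (0,T], and v̲(x,0) ≤ v̄(x,0)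 for all x ∈ ℝ. Then v̲(x,t) ≤ v̄(x,t) for all (x,t) ∈ ℝ × [0,T]. -/
/-!
The difference `w = v̲ - v̄` satisfies `Lop w ≤ 0`, `w(·,0) ≤ 0` and `w ≤ 2C e^{κ|x|}`. For `ε > 0`
the perturbation `z = w - ε e^{αt} cosh((κ+1)x)` is negative for large `|x|`, so if it were
positive somewhere it would attain a positive maximum over `ℝ × [0,T]`, at a time `t₀ > 0`. There
`∂ₜz ≥ 0`, `∂ₓz = 0` and `∂ₓₓz ≤ 0`, whence `Lop z ≥ r_G z ≥ 0`. But once `α` exceeds the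
coefficients of `Lop` on `[0,T]`, `Lop` of the barrier is positive, so `Lop z < 0`. Hence `z ≤ 0`,
and `ε → 0` gives `w ≤ 0`.
-/

open Real Set

/-- Regularity of a candidate super- or subsolution `u : ℝ × [0,T] → ℝ` with derivative
witnesses `ut = ∂u/∂t`, `ux = ∂u/∂x`, `uxx = ∂²u/∂x²`: `u` is continuous on
`ℝ × [0,T]`, the derivatives exist and are continuous on `ℝ × (0,T]`, and `u`
satisfies the exponential growth bound `|u(x,t)| ≤ C e^{κ|x|}`. -/
structure IsRegularParabolic (T : ℝ) (u ut ux uxx : ℝ → ℝ → ℝ) (C kappa : ℝ) : Prop where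
  cont : ContinuousOn (fun p : ℝ × ℝ => u p.1 p.2) (Set.univ ×ˢ Set.Icc 0 T)
  hasDeriv_t : ∀ x : ℝ, ∀ t ∈ Set.Ioc (0:ℝ) T,
    HasDerivWithinAt (fun s => u x s) (ut x t) (Set.Ioc 0 T) t
  hasDeriv_x : ∀ x : ℝ, ∀ t ∈ Set.Ioc (0:ℝ) T, HasDerivAt (fun y => u y t) (ux x t) x
  hasDeriv_xx : ∀ x : ℝ, ∀ t ∈ Set.Ioc (0:ℝ) T, HasDerivAt (fun y => ux y t) (uxx x t) x
  cont_t : ContinuousOn (fun p : ℝ × ℝ => ut p.1 p.2) (Set.univ ×ˢ Set.Ioc 0 T)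
  cont_x : ContinuousOn (fun p : ℝ × ℝ => ux p.1 p.2) (Set.univ ×ˢ Set.Ioc 0 T)
  cont_xx : ContinuousOn (fun p : ℝ × ℝ => uxx p.1 p.2) (Set.univ ×ˢ Set.Ioc 0 T)
  growth : ∀ x : ℝ, ∀ t ∈ Set.Icc (0:ℝ) T, |u x t| ≤ C * Real.exp (kappa * |x|)

/-- The parabolic Black–Scholes operator
`𝔏u = ∂u/∂t − (1/2)σ(t)²∂²u/∂x² − (q_S(t) − γ_S(t) − (1/2)σ(t)²)∂u/∂x + r_G u`
evaluated via the derivative witnesses. -/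
noncomputable def Lop (sigma qS gammaS : ℝ → ℝ) (rG : ℝ) (u ut ux uxx : ℝ → ℝ → ℝ) (x t : ℝ) : ℝ :=
  ut x t - (1/2) * (sigma t) ^ 2 * uxx x t
    - (qS t - gammaS t - (1/2) * (sigma t) ^ 2) * ux x t + rG * u x t

open Filter Topology

theorem IsMaxOn.hasDerivWithinAt_Ioc_nonneg {f : ℝ → ℝ} {f' a b t : ℝ}
    (h : IsMaxOn f (Ioc a b) t) (ht : t ∈ Ioc a b) (hf : HasDerivWithinAt f f' (Ioc a b) t) :
    0 ≤ f' := by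
  have hcone : a - t ∈ posTangentConeAt (Ioc a b) t :=
    sub_mem_posTangentConeAt_of_openSegment_subset <| by
      rw [openSegment_symm, openSegment_eq_Ioo ht.1]
      exact Ioo_subset_Ioc_self.trans (Ioc_subset_Ioc_right ht.2)
  have hslope := h.localize.hasFDerivWithinAt_nonpos hf hcone
  rw [ContinuousLinearMap.toSpanSingleton_apply, smul_eq_mul] at hslope
  exact nonneg_of_mul_nonpos_right hslope (sub_neg.2 ht.1)

/-- If `f'' > 0`, the second-derivative test makes `a` also a local minimum, so `f` is locally
constant and `f'' = 0`. -/
theorem IsLocalMax.hasDerivAt_deriv_nonpos {f f' : ℝ → ℝ} {a f'' : ℝ} (h : IsLocalMax f a)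
    (hf : ∀ᶠ x in 𝓝 a, HasDerivAt f (f' x) x) (hf' : HasDerivAt f' f'' a) : f'' ≤ 0 := by
  by_contra! hpos
  have hderiv : deriv f =ᶠ[𝓝 a] f' := hf.mono fun x hx => hx.deriv
  have hmin : IsLocalMin f a := by
    refine isLocalMin_of_deriv_deriv_pos ?_ ?_ hf.self_of_nhds.continuousAt
    · rwa [hderiv.deriv_eq, hf'.deriv]
    · rw [hderiv.self_of_nhds]
      exact h.hasDerivAt_eq_zero hf.self_of_nhds
  have hconst : f =ᶠ[𝓝 a] fun _ => f a :=
    (h.and hmin).mono fun x hx => le_antisymm hx.1 hx.2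
  have hzero : f' =ᶠ[𝓝 a] fun _ => 0 :=
    (hconst.eventually_nhds.and hf).mono fun x hx =>
      hx.2.unique ((hasDerivAt_const x (f a)).congr_of_eventuallyEq hx.1)
  exact hpos.ne' (hf'.unique ((hasDerivAt_const a (0:ℝ)).congr_of_eventuallyEq hzero))

theorem exists_isMaxOn_univ_prod {g : ℝ × ℝ → ℝ} {K : Set ℝ} (hK : IsCompact K)
    (hg : ContinuousOn g (univ ×ˢ K)) {R : ℝ} (hR : ∀ p ∈ univ ×ˢ K, R < |p.1| → g p < 0)
    {p₁ : ℝ × ℝ} (hp₁ : p₁ ∈ univ ×ˢ K) (hg₁ : 0 ≤ g p₁) :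
    ∃ p₀ ∈ univ ×ˢ K, IsMaxOn g (univ ×ˢ K) p₀ := by
  refine hg.exists_isMaxOn' (isClosed_univ.prod hK.isClosed) hp₁ ?_
  have hbox := ((isCompact_Icc (a := -R) (b := R)).prod hK).compl_mem_cocompact
  filter_upwards [mem_inf_of_left hbox, mem_inf_of_right (mem_principal_self _)] with p hpbox hp
  have hfar : R < |p.1| := by
    by_contra! hle
    exact hpbox ⟨abs_le.1 hle, hp.2⟩
  exact (hR p hp hfar).le.trans hg₁

theorem IsCompact.exists_pos_forall_lt {X : Type*} [TopologicalSpace X] {K : Set X}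
    (hK : IsCompact K) {g : X → ℝ} (hg : ContinuousOn g K) : ∃ α, 0 < α ∧ ∀ t ∈ K, g t < α := by
  obtain ⟨M, hM⟩ := hK.exists_bound_of_continuousOn hg
  refine ⟨|M| + 1, by positivity, fun t ht => ?_⟩
  linarith [le_abs_self (g t), le_abs_self M, norm_eq_abs (g t) ▸ hM t ht]

theorem Real.abs_sinh_le_cosh (x : ℝ) : |sinh x| ≤ cosh x := by
  rw [abs_sinh, ← cosh_abs]
  linarith [cosh_sub_sinh |x|, exp_pos (-|x|)]

theorem mul_exp_lt_mul_cosh {C κ ε x : ℝ} (hε : 0 < ε) (hκ : 0 ≤ κ) (hx : 2 * C / ε < |x|) :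
    C * exp (κ * |x|) < ε * cosh ((κ + 1) * x) := by
  have hcosh : exp (κ * |x|) * exp |x| ≤ 2 * cosh ((κ + 1) * x) := by
    have := exp_abs_le ((κ + 1) * x)
    rw [abs_mul, abs_of_nonneg (by linarith : 0 ≤ κ + 1)] at this
    rw [← exp_add, cosh_eq, show κ * |x| + |x| = (κ + 1) * |x| by ring]
    linarith
  have hC : 2 * C < ε * exp |x| := by
    rw [div_lt_iff₀ hε] at hx
    nlinarith [add_one_le_exp |x|]
  nlinarith [exp_pos (κ * |x|)]

/-- The differentiability part of `IsRegularParabolic`; unlike the latter it is closed under linear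
combinations, since it fixes no growth constant. -/
structure HasParabolicDerivs (T : ℝ) (u ut ux uxx : ℝ → ℝ → ℝ) : Prop where
  hasDeriv_t : ∀ x : ℝ, ∀ t ∈ Ioc (0:ℝ) T,
    HasDerivWithinAt (fun s => u x s) (ut x t) (Ioc 0 T) t
  hasDeriv_x : ∀ x : ℝ, ∀ t ∈ Ioc (0:ℝ) T, HasDerivAt (fun y => u y t) (ux x t) x
  hasDeriv_xx : ∀ x : ℝ, ∀ t ∈ Ioc (0:ℝ) T, HasDerivAt (fun y => ux y t) (uxx x t) x

theorem IsRegularParabolic.hasParabolicDerivs {T C kappa : ℝ} {u ut ux uxx : ℝ → ℝ → ℝ}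
    (h : IsRegularParabolic T u ut ux uxx C kappa) : HasParabolicDerivs T u ut ux uxx :=
  ⟨h.hasDeriv_t, h.hasDeriv_x, h.hasDeriv_xx⟩

namespace HasParabolicDerivs

variable {T : ℝ} {u ut ux uxx v vt vx vxx : ℝ → ℝ → ℝ}

theorem sub (hu : HasParabolicDerivs T u ut ux uxx) (hv : HasParabolicDerivs T v vt vx vxx) :
    HasParabolicDerivs T (fun x t => u x t - v x t) (fun x t => ut x t - vt x t)
      (fun x t => ux x t - vx x t) (fun x t => uxx x t - vxx x t) where
  hasDeriv_t x t ht := (hu.hasDeriv_t x t ht).sub (hv.hasDeriv_t x t ht)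
  hasDeriv_x x t ht := (hu.hasDeriv_x x t ht).sub (hv.hasDeriv_x x t ht)
  hasDeriv_xx x t ht := (hu.hasDeriv_xx x t ht).sub (hv.hasDeriv_xx x t ht)

theorem const_mul (hu : HasParabolicDerivs T u ut ux uxx) (c : ℝ) :
    HasParabolicDerivs T (fun x t => c * u x t) (fun x t => c * ut x t)
      (fun x t => c * ux x t) (fun x t => c * uxx x t) where
  hasDeriv_t x t ht := (hu.hasDeriv_t x t ht).const_mul c
  hasDeriv_x x t ht := (hu.hasDeriv_x x t ht).const_mul c
  hasDeriv_xx x t ht := (hu.hasDeriv_xx x t ht).const_mul c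

theorem Lop_nonneg_of_isMaxOn (hu : HasParabolicDerivs T u ut ux uxx) (sigma qS gammaS : ℝ → ℝ)
    {rG : ℝ} (hrG : 0 ≤ rG) {x₀ t₀ : ℝ} (ht₀ : t₀ ∈ Ioc 0 T)
    (hmax : IsMaxOn (fun p : ℝ × ℝ => u p.1 p.2) (univ ×ˢ Icc 0 T) (x₀, t₀))
    (hu₀ : 0 ≤ u x₀ t₀) : 0 ≤ Lop sigma qS gammaS rG u ut ux uxx x₀ t₀ := by
  have hmax_t : IsMaxOn (fun s => u x₀ s) (Ioc 0 T) t₀ := fun s hs =>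
    hmax (show (x₀, s) ∈ univ ×ˢ Icc 0 T from ⟨mem_univ _, Ioc_subset_Icc_self hs⟩)
  have hmax_x : IsLocalMax (fun y => u y t₀) x₀ := Eventually.of_forall fun y =>
    hmax (show (y, t₀) ∈ univ ×ˢ Icc 0 T from ⟨mem_univ _, Ioc_subset_Icc_self ht₀⟩)
  have hut : 0 ≤ ut x₀ t₀ := hmax_t.hasDerivWithinAt_Ioc_nonneg ht₀ (hu.hasDeriv_t x₀ t₀ ht₀)
  have hux : ux x₀ t₀ = 0 := hmax_x.hasDerivAt_eq_zero (hu.hasDeriv_x x₀ t₀ ht₀)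
  have huxx : uxx x₀ t₀ ≤ 0 := hmax_x.hasDerivAt_deriv_nonpos
    (Eventually.of_forall fun y => hu.hasDeriv_x y t₀ ht₀) (hu.hasDeriv_xx x₀ t₀ ht₀)
  rw [Lop, hux, mul_zero, sub_zero]
  nlinarith [mul_nonneg hrG hu₀, mul_nonneg (sq_nonneg (sigma t₀)) (neg_nonneg.2 huxx)]

end HasParabolicDerivs

section Linearity

variable (sigma qS gammaS : ℝ → ℝ) (rG : ℝ) (u ut ux uxx v vt vx vxx : ℝ → ℝ → ℝ) (x t : ℝ)

theorem Lop_sub :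
    Lop sigma qS gammaS rG (fun x t => u x t - v x t) (fun x t => ut x t - vt x t)
      (fun x t => ux x t - vx x t) (fun x t => uxx x t - vxx x t) x t =
      Lop sigma qS gammaS rG u ut ux uxx x t - Lop sigma qS gammaS rG v vt vx vxx x t := by
  simp only [Lop]
  ring

theorem Lop_const_mul (c : ℝ) :
    Lop sigma qS gammaS rG (fun x t => c * u x t) (fun x t => c * ut x t)
      (fun x t => c * ux x t) (fun x t => c * uxx x t) x t =
      c * Lop sigma qS gammaS rG u ut ux uxx x t := by
  simp only [Lop]
  ring

end Linearity

noncomputable def expCosh (α β x t : ℝ) : ℝ := exp (α * t) * cosh (β * x)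

theorem continuous_expCosh (α β : ℝ) : Continuous fun p : ℝ × ℝ => expCosh α β p.1 p.2 := by
  unfold expCosh
  fun_prop

theorem hasParabolicDerivs_expCosh (T α β : ℝ) :
    HasParabolicDerivs T (expCosh α β) (fun x t => α * expCosh α β x t)
      (fun x t => β * exp (α * t) * sinh (β * x)) (fun x t => β ^ 2 * expCosh α β x t) where
  hasDeriv_t x t _ := by
    have := ((hasDerivAt_id t).const_mul α).exp.mul_const (cosh (β * x))
    exact (this.congr_deriv (by simp only [expCosh, id]; ring)).hasDerivWithinAt
  hasDeriv_x x t _ := by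
    have := ((hasDerivAt_id x).const_mul β).cosh.const_mul (exp (α * t))
    exact this.congr_deriv (by simp only [id]; ring)
  hasDeriv_xx x t _ := by
    have := ((hasDerivAt_id x).const_mul β).sinh.const_mul (β * exp (α * t))
    exact this.congr_deriv (by simp only [expCosh, id]; ring)

theorem Lop_expCosh_pos {sigma qS gammaS : ℝ → ℝ} {rG α β x t : ℝ} (hrG : 0 ≤ rG) (hβ : 0 ≤ β)
    (hα : (1/2) * sigma t ^ 2 * β ^ 2 + |qS t - gammaS t - (1/2) * sigma t ^ 2| * β < α) :
    0 < Lop sigma qS gammaS rG (expCosh α β) (fun x t => α * expCosh α β x t)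
      (fun x t => β * exp (α * t) * sinh (β * x)) (fun x t => β ^ 2 * expCosh α β x t) x t := by
  set b := qS t - gammaS t - (1/2) * sigma t ^ 2
  have hdrift : b * sinh (β * x) ≤ |b| * cosh (β * x) :=
    calc b * sinh (β * x) ≤ |b| * |sinh (β * x)| := by rw [← abs_mul]; exact le_abs_self _
      _ ≤ |b| * cosh (β * x) := by gcongr; exact abs_sinh_le_cosh _
  have hbracket : 0 < (α - (1/2) * sigma t ^ 2 * β ^ 2 + rG) * cosh (β * x)
      - β * (b * sinh (β * x)) := by
    have hcosh := cosh_pos (β * x)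
    nlinarith [mul_le_mul_of_nonneg_left hdrift hβ, mul_nonneg hrG hcosh.le]
  have hLop : Lop sigma qS gammaS rG (expCosh α β) (fun x t => α * expCosh α β x t)
      (fun x t => β * exp (α * t) * sinh (β * x)) (fun x t => β ^ 2 * expCosh α β x t) x t =
      exp (α * t) * ((α - (1/2) * sigma t ^ 2 * β ^ 2 + rG) * cosh (β * x)
        - β * (b * sinh (β * x))) := by
    simp only [Lop, expCosh, b]
    ring
  rw [hLop]
  exact mul_pos (exp_pos _) hbracket

section MaximumPrinciple

variable {T rG : ℝ} {sigma qS gammaS : ℝ → ℝ} {u ut ux uxx : ℝ → ℝ → ℝ}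

theorem nonpos_of_Lop_neg (hu : HasParabolicDerivs T u ut ux uxx)
    (hcont : ContinuousOn (fun p : ℝ × ℝ => u p.1 p.2) (univ ×ˢ Icc 0 T)) (hrG : 0 ≤ rG)
    (hL : ∀ x : ℝ, ∀ t ∈ Ioc (0:ℝ) T, Lop sigma qS gammaS rG u ut ux uxx x t < 0)
    (h0 : ∀ x : ℝ, u x 0 ≤ 0) {R : ℝ} (hR : ∀ x : ℝ, R < |x| → ∀ t ∈ Icc (0:ℝ) T, u x t < 0) :
    ∀ x : ℝ, ∀ t ∈ Icc (0:ℝ) T, u x t ≤ 0 := by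
  intro x₁ t₁ ht₁
  by_contra! hpos
  obtain ⟨⟨x₀, t₀⟩, ⟨-, ht₀⟩, hmax⟩ := exists_isMaxOn_univ_prod isCompact_Icc hcont
    (fun p hp hfar => hR p.1 hfar p.2 hp.2) (p₁ := (x₁, t₁)) ⟨mem_univ _, ht₁⟩ hpos.le
  have hu₀ : 0 < u x₀ t₀ := hpos.trans_le (isMaxOn_iff.1 hmax (x₁, t₁) ⟨mem_univ _, ht₁⟩)
  have ht₀' : t₀ ∈ Ioc 0 T := by
    refine ⟨ht₀.1.lt_of_ne ?_, ht₀.2⟩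
    rintro rfl
    exact (h0 x₀).not_gt hu₀
  exact (hL x₀ t₀ ht₀').not_ge (hu.Lop_nonneg_of_isMaxOn sigma qS gammaS hrG ht₀' hmax hu₀.le)

theorem nonpos_of_Lop_nonpos {C κ : ℝ} (hsigma : ContinuousOn sigma (Icc 0 T))
    (hqS : ContinuousOn qS (Icc 0 T)) (hgammaS : ContinuousOn gammaS (Icc 0 T)) (hrG : 0 ≤ rG)
    (hκ : 0 ≤ κ) (hu : HasParabolicDerivs T u ut ux uxx)
    (hcont : ContinuousOn (fun p : ℝ × ℝ => u p.1 p.2) (univ ×ˢ Icc 0 T))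
    (hgrowth : ∀ x : ℝ, ∀ t ∈ Icc (0:ℝ) T, u x t ≤ C * exp (κ * |x|))
    (hL : ∀ x : ℝ, ∀ t ∈ Ioc (0:ℝ) T, Lop sigma qS gammaS rG u ut ux uxx x t ≤ 0)
    (h0 : ∀ x : ℝ, u x 0 ≤ 0) :
    ∀ x : ℝ, ∀ t ∈ Icc (0:ℝ) T, u x t ≤ 0 := by
  obtain ⟨α, hα₀, hα⟩ := isCompact_Icc.exists_pos_forall_lt (g := fun t =>
    (1/2) * sigma t ^ 2 * (κ + 1) ^ 2 + |qS t - gammaS t - (1/2) * sigma t ^ 2| * (κ + 1))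
    (by fun_prop)
  have hΦ := hasParabolicDerivs_expCosh T α (κ + 1)
  have hbarrier : ∀ ε > 0, ∀ x : ℝ, ∀ t ∈ Icc (0:ℝ) T, u x t ≤ ε * expCosh α (κ + 1) x t := by
    intro ε hε x t ht
    refine sub_nonpos.1 (nonpos_of_Lop_neg (sigma := sigma) (qS := qS) (gammaS := gammaS)
      (R := 2 * C / ε) (hu.sub (hΦ.const_mul ε))
      (hcont.sub (continuous_const.mul (continuous_expCosh α (κ + 1))).continuousOn) hrG
      ?_ ?_ ?_ x t ht)
    · intro y s hs
      have hLΦ := Lop_expCosh_pos (sigma := sigma) (qS := qS) (gammaS := gammaS) (x := y) hrG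
        (by linarith) (hα s (Ioc_subset_Icc_self hs))
      rw [Lop_sub, Lop_const_mul]
      linarith [hL y s hs, mul_pos hε hLΦ]
    · intro y
      simp only [expCosh, mul_zero, exp_zero, one_mul]
      linarith [h0 y, mul_pos hε (cosh_pos ((κ + 1) * y))]
    · intro y hy s hs
      have hexp : 1 ≤ exp (α * s) := one_le_exp (mul_nonneg hα₀.le hs.1)
      have hΦ_ge := mul_le_mul_of_nonneg_left hexp (mul_pos hε (cosh_pos ((κ + 1) * y))).le
      simp only [expCosh]
      linarith [hgrowth y s hs, mul_exp_lt_mul_cosh hε hκ hy]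
  intro x t ht
  refine le_of_forall_pos_le_add fun ε hε => ?_
  have hpos : 0 < expCosh α (κ + 1) x t := mul_pos (exp_pos _) (cosh_pos _)
  simpa [div_mul_cancel₀ _ hpos.ne'] using hbarrier (ε / expCosh α (κ + 1) x t)
    (div_pos hε hpos) x t ht

end MaximumPrinciple

theorem stmt_10_general (T : ℝ) (sigma qS gammaS : ℝ → ℝ)
    (hsigmac : ContinuousOn sigma (Set.Icc 0 T))
    (hqc : ContinuousOn qS (Set.Icc 0 T)) (hgc : ContinuousOn gammaS (Set.Icc 0 T))
    (rG : ℝ) (hrG : 0 ≤ rG) (f : ℝ → ℝ → ℝ)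
    (vsup vsupt vsupx vsupxx vsub vsubt vsubx vsubxx : ℝ → ℝ → ℝ)
    (C kappa : ℝ) (hkappa : 0 ≤ kappa)
    (hregsup : IsRegularParabolic T vsup vsupt vsupx vsupxx C kappa)
    (hregsub : IsRegularParabolic T vsub vsubt vsubx vsubxx C kappa)
    (hsup : ∀ x : ℝ, ∀ t ∈ Set.Ioc (0:ℝ) T,
      Lop sigma qS gammaS rG vsup vsupt vsupx vsupxx x t ≥ f x t)
    (hsub : ∀ x : ℝ, ∀ t ∈ Set.Ioc (0:ℝ) T,
      Lop sigma qS gammaS rG vsub vsubt vsubx vsubxx x t ≤ f x t)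
    (hinit : ∀ x : ℝ, vsub x 0 ≤ vsup x 0) :
    ∀ x : ℝ, ∀ t ∈ Set.Icc (0:ℝ) T, vsub x t ≤ vsup x t := by
  have hgrowth : ∀ x : ℝ, ∀ t ∈ Icc (0:ℝ) T,
      vsub x t - vsup x t ≤ 2 * C * exp (kappa * |x|) := fun x t ht => by
    linarith [le_abs_self (vsub x t), neg_abs_le (vsup x t), hregsub.growth x t ht,
      hregsup.growth x t ht]
  have hL : ∀ x : ℝ, ∀ t ∈ Ioc (0:ℝ) T, Lop sigma qS gammaS rG (fun x t => vsub x t - vsup x t)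
      (fun x t => vsubt x t - vsupt x t) (fun x t => vsubx x t - vsupx x t)
      (fun x t => vsubxx x t - vsupxx x t) x t ≤ 0 := fun x t ht => by
    rw [Lop_sub]
    linarith [hsub x t ht, hsup x t ht]
  intro x t ht
  exact sub_nonpos.1 <| nonpos_of_Lop_nonpos hsigmac hqc hgc hrG hkappa
    (hregsub.hasParabolicDerivs.sub hregsup.hasParabolicDerivs) (hregsub.cont.sub hregsup.cont)
    hgrowth hL (fun x => sub_nonpos.2 (hinit x)) x t ht

/-- Weak comparison: a supersolution `v̄` and a subsolution `v̲` of
`∂v/∂t − 𝒜(t)v + r_G v = f`, both of exponential growth, ordered at `t = 0`,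
are ordered on all of `ℝ × [0,T]`. -/
theorem stmt_10 (T : ℝ) (hT : 0 < T) (sigma qS gammaS : ℝ → ℝ)
    (hsigmac : ContinuousOn sigma (Set.Icc 0 T))
    (hsigmapos : ∀ t ∈ Set.Icc (0:ℝ) T, 0 < sigma t)
    (hqc : ContinuousOn qS (Set.Icc 0 T)) (hgc : ContinuousOn gammaS (Set.Icc 0 T))
    (rG : ℝ) (hrG : 0 ≤ rG) (f : ℝ → ℝ → ℝ)
    (vsup vsupt vsupx vsupxx vsub vsubt vsubx vsubxx : ℝ → ℝ → ℝ)
    (C kappa : ℝ) (hC : 0 ≤ C) (hkappa : 0 ≤ kappa)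
    (hregsup : IsRegularParabolic T vsup vsupt vsupx vsupxx C kappa)
    (hregsub : IsRegularParabolic T vsub vsubt vsubx vsubxx C kappa)
    (hsup : ∀ x : ℝ, ∀ t ∈ Set.Ioc (0:ℝ) T,
      Lop sigma qS gammaS rG vsup vsupt vsupx vsupxx x t ≥ f x t)
    (hsub : ∀ x : ℝ, ∀ t ∈ Set.Ioc (0:ℝ) T,
      Lop sigma qS gammaS rG vsub vsubt vsubx vsubxx x t ≤ f x t)
    (hinit : ∀ x : ℝ, vsub x 0 ≤ vsup x 0) :
    ∀ x : ℝ, ∀ t ∈ Set.Icc (0:ℝ) T, vsub x t ≤ vsup x t :=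
  stmt_10_general T sigma qS gammaS hsigmac hqc hgc rG hrG f vsup vsupt vsupx vsupxx vsub vsubt
    vsubx vsubxx C kappa hkappa hregsup hregsub hsup hsub hinit
end
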